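/- Let n ≥ 3. On the set where all coordinates of x are nonzero and x ≠ 0, the derivative X_1Ñ(x), where X_1 = ∂_{x_1} and Ñ(x) = (‖x‖ⁿ+|x_{n+1}|)^{1/n}, satisfies the lower bound |X_1 Ñ(x)| ≥ C ‖x‖^{(n−1)/2} |x_1|^{(n−1)/2} / Ñ(x)^{n−1} for some constant C = C(n) > 0. -/

import Mathlib

open Real Finset

/-- The quasi-norm `‖x‖` on the filiform group `G_{n+1}`. -/
noncomputable def filNorm (n : ℕ) (x : ℕ → ℝ) : ℝ :=
  (∑ j ∈ Finset.Icc 2 n,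
      (|x 1| ^ (((n : ℝ) + 1) / 2) + |x 2| ^ (((n : ℝ) + 1) / 2)
        + |x j| ^ (((n : ℝ) + 1) / (2 * ((j : ℝ) - 1)))) ^ (2 * (n : ℝ) / ((n : ℝ) + 1)))
    ^ (1 / (n : ℝ))

/-- The homogeneous norm `Ñ(x) = (‖x‖ⁿ + |x_{n+1}|)^{1/n}` on `G_{n+1}`. -/
noncomputable def filN (n : ℕ) (x : ℕ → ℝ) : ℝ :=
  (filNorm n x ^ (n : ℝ) + |x (n + 1)|) ^ (1 / (n : ℝ))

/-!
Write `Aⱼ = |x₁|^{(n+1)/2} + |x₂|^{(n+1)/2} + |xⱼ|^{(n+1)/(2(j-1))}`, so that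
`‖x‖ⁿ = ∑ⱼ Aⱼ^{2n/(n+1)}`. The chain rule gives
`|X₁Ñ(x)| = |x₁|^{(n-1)/2} (∑ⱼ Aⱼ^{(n-1)/(n+1)}) / Ñ(x)^{n-1}`,
so the bound holds with `C = 1` as soon as `‖x‖^{(n-1)/2} ≤ ∑ⱼ Aⱼ^{(n-1)/(n+1)}`.
This is the monotonicity `(∑ Aⱼ^γ)^{1/γ} ≤ (∑ Aⱼ^β)^{1/β}` of `ℓ^p`-norms
for `β = (n-1)/(n+1) ≤ γ = 2n/(n+1)`.
-/

namespace Real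

variable {ι : Type*} {s : Finset ι} {f : ι → ℝ}

theorem sum_rpow_le_rpow_sum {p : ℝ} (hf : ∀ i ∈ s, 0 ≤ f i) (hp : 1 ≤ p) :
    ∑ i ∈ s, f i ^ p ≤ (∑ i ∈ s, f i) ^ p := by
  have hp' : 1 + (p - 1) ≠ 0 := by linarith
  calc ∑ i ∈ s, f i ^ p = ∑ i ∈ s, f i * f i ^ (p - 1) :=
        sum_congr rfl fun i hi => by rw [← rpow_one_add' (hf i hi) hp', add_sub_cancel]
    _ ≤ ∑ i ∈ s, f i * (∑ i ∈ s, f i) ^ (p - 1) := by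
        refine sum_le_sum fun i hi => mul_le_mul_of_nonneg_left ?_ (hf i hi)
        exact rpow_le_rpow (hf i hi) (single_le_sum hf hi) (by linarith)
    _ = (∑ i ∈ s, f i) ^ p := by
        rw [← sum_mul, ← rpow_one_add' (sum_nonneg hf) hp', add_sub_cancel]

theorem rpow_sum_rpow_le_sum_rpow {β γ : ℝ} (hf : ∀ i ∈ s, 0 ≤ f i) (hβ : 0 < β)
    (hβγ : β ≤ γ) : (∑ i ∈ s, f i ^ γ) ^ (β / γ) ≤ ∑ i ∈ s, f i ^ β := by
  have hfβ : ∀ i ∈ s, 0 ≤ f i ^ β := fun i hi => rpow_nonneg (hf i hi) β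
  have hpow : ∑ i ∈ s, f i ^ γ ≤ (∑ i ∈ s, f i ^ β) ^ (γ / β) :=
    calc ∑ i ∈ s, f i ^ γ = ∑ i ∈ s, (f i ^ β) ^ (γ / β) :=
          sum_congr rfl fun i hi => by rw [← rpow_mul (hf i hi), mul_div_cancel₀ _ hβ.ne']
      _ ≤ (∑ i ∈ s, f i ^ β) ^ (γ / β) :=
          sum_rpow_le_rpow_sum hfβ ((one_le_div hβ).2 hβγ)
  calc (∑ i ∈ s, f i ^ γ) ^ (β / γ)
      ≤ ((∑ i ∈ s, f i ^ β) ^ (γ / β)) ^ (β / γ) := by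
        gcongr
        · exact sum_nonneg fun i hi => rpow_nonneg (hf i hi) γ
        · exact div_nonneg hβ.le (hβ.le.trans hβγ)
    _ = ∑ i ∈ s, f i ^ β := by
        rw [← rpow_mul (sum_nonneg hfβ), div_mul_div_cancel₀ hβ.ne',
          div_self (hβ.trans_le hβγ).ne', rpow_one]

theorem abs_sign_of_ne_zero {a : ℝ} (ha : a ≠ 0) : |(SignType.sign a : ℝ)| = 1 := by
  rcases ha.lt_or_gt with h | h
  · simp [_root_.sign_neg h]
  · simp [_root_.sign_pos h]

end Real

section SumAbsRpow

variable {ι : Type*} (s : Finset ι) (B : ι → ℝ) (p q : ℝ)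

/-- `‖x‖ⁿ` as a function of `u = x₁`, the rest of the `j`-th summand being `B j`. -/
noncomputable def sumAbsRpow (u : ℝ) : ℝ :=
  ∑ j ∈ s, (|u| ^ p + B j) ^ q

variable {s B p q}

theorem sumAbsRpow_pos {a : ℝ} (ha : a ≠ 0) (hB : ∀ j ∈ s, 0 ≤ B j) (hs : s.Nonempty) :
    0 < sumAbsRpow s B p q a :=
  sum_pos (fun j hj => rpow_pos_of_pos
    (add_pos_of_pos_of_nonneg (rpow_pos_of_pos (abs_pos.2 ha) p) (hB j hj)) q) hs

theorem hasDerivAt_sumAbsRpow {a : ℝ} (ha : a ≠ 0) (hB : ∀ j ∈ s, 0 ≤ B j) :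
    HasDerivAt (sumAbsRpow s B p q)
      (SignType.sign a * p * q * |a| ^ (p - 1) * sumAbsRpow s B p (q - 1) a) a := by
  have habs : HasDerivAt (fun u => |u| ^ p) (SignType.sign a * p * |a| ^ (p - 1)) a :=
    (hasDerivAt_abs ha).rpow_const (.inl (abs_ne_zero.2 ha))
  have hterm (j) (hj : j ∈ s) : HasDerivAt (fun u => (|u| ^ p + B j) ^ q)
      (SignType.sign a * p * |a| ^ (p - 1) * q * (|a| ^ p + B j) ^ (q - 1)) a :=
    (habs.add_const (B j)).rpow_const
      (.inl (add_pos_of_pos_of_nonneg (rpow_pos_of_pos (abs_pos.2 ha) p) (hB j hj)).ne')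
  refine (HasDerivAt.fun_sum hterm).congr_deriv ?_
  rw [sumAbsRpow, mul_sum]
  exact sum_congr rfl fun j _ => by ring

end SumAbsRpow

section Filiform

variable {n : ℕ}

noncomputable def filNormRest (n : ℕ) (x : ℕ → ℝ) (j : ℕ) : ℝ :=
  |x 2| ^ (((n : ℝ) + 1) / 2) + |x j| ^ (((n : ℝ) + 1) / (2 * ((j : ℝ) - 1)))

theorem filNormRest_nonneg (n : ℕ) (x : ℕ → ℝ) (j : ℕ) : 0 ≤ filNormRest n x j := by
  unfold filNormRest; positivity

theorem filNormRest_update_one (x : ℕ → ℝ) (u : ℝ) {j : ℕ} (hj : j ≠ 1) :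
    filNormRest n (Function.update x 1 u) j = filNormRest n x j := by
  rw [filNormRest, filNormRest, Function.update_of_ne (by norm_num : 2 ≠ 1),
    Function.update_of_ne hj]

theorem filNorm_nonneg (n : ℕ) (x : ℕ → ℝ) : 0 ≤ filNorm n x := by
  unfold filNorm; positivity

theorem filN_nonneg (n : ℕ) (x : ℕ → ℝ) : 0 ≤ filN n x := by
  unfold filN; have := filNorm_nonneg n x; positivity

theorem filNorm_rpow_natCast (hn : n ≠ 0) (x : ℕ → ℝ) :
    filNorm n x ^ (n : ℝ) = sumAbsRpow (Icc 2 n) (filNormRest n x)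
      (((n : ℝ) + 1) / 2) (2 * (n : ℝ) / ((n : ℝ) + 1)) (x 1) := by
  rw [filNorm, ← rpow_mul (by positivity), one_div_mul_cancel (Nat.cast_ne_zero.2 hn), rpow_one]
  simp only [sumAbsRpow, filNormRest, add_assoc]

theorem filN_update_one (hn : n ≠ 0) (x : ℕ → ℝ) (u : ℝ) :
    filN n (Function.update x 1 u) =
      (sumAbsRpow (Icc 2 n) (filNormRest n x) (((n : ℝ) + 1) / 2)
        (2 * (n : ℝ) / ((n : ℝ) + 1)) u + |x (n + 1)|) ^ (1 / (n : ℝ)) := by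
  rw [filN, filNorm_rpow_natCast hn, Function.update_self,
    Function.update_of_ne (by omega : n + 1 ≠ 1)]
  congr 2
  exact sum_congr rfl fun j hj => by
    rw [filNormRest_update_one x u (by simp at hj; omega)]

theorem hasDerivAt_filN_update_one (hn : 2 ≤ n) {x : ℕ → ℝ} (hx1 : x 1 ≠ 0) :
    HasDerivAt (fun t => filN n (Function.update x 1 (x 1 + t)))
      (SignType.sign (x 1) * (|x 1| ^ (((n : ℝ) - 1) / 2) *
        sumAbsRpow (Icc 2 n) (filNormRest n x)
          (((n : ℝ) + 1) / 2) (((n : ℝ) - 1) / ((n : ℝ) + 1)) (x 1) *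
        filN n x ^ (1 - (n : ℝ)))) 0 := by
  set p : ℝ := ((n : ℝ) + 1) / 2
  set q : ℝ := 2 * (n : ℝ) / ((n : ℝ) + 1)
  set S := sumAbsRpow (Icc 2 n) (filNormRest n x) p q
  set c := |x (n + 1)|
  have hB : ∀ j ∈ Icc 2 n, 0 ≤ filNormRest n x j := fun j _ => filNormRest_nonneg n x j
  have hT : 0 < S (x 1) + c :=
    add_pos_of_pos_of_nonneg (sumAbsRpow_pos hx1 hB ⟨2, by simp; omega⟩) (abs_nonneg _)
  have hN : filN n x = (S (x 1) + c) ^ (1 / (n : ℝ)) := by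
    rw [← filN_update_one (by omega), Function.update_eq_self]
  have hN' := ((hasDerivAt_sumAbsRpow hx1 hB).add_const c).rpow_const
    (p := 1 / (n : ℝ)) (.inl hT.ne')
  rw [← add_zero (x 1)] at hN'
  simp_rw [filN_update_one (by omega : n ≠ 0)]
  refine (hN'.comp_const_add (x 1) 0).congr_deriv ?_
  rw [add_zero, hN, ← rpow_mul hT.le,
    show 1 / (n : ℝ) * (1 - n) = 1 / n - 1 by field_simp,
    show p - 1 = ((n : ℝ) - 1) / 2 by ring,
    show q - 1 = ((n : ℝ) - 1) / ((n : ℝ) + 1) by simp only [q]; field_simp; ring]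
  simp only [S, p, q]
  field_simp

theorem filNorm_rpow_le_sumAbsRpow (hn : 2 ≤ n) (x : ℕ → ℝ) :
    filNorm n x ^ (((n : ℝ) - 1) / 2) ≤ sumAbsRpow (Icc 2 n) (filNormRest n x)
      (((n : ℝ) + 1) / 2) (((n : ℝ) - 1) / ((n : ℝ) + 1)) (x 1) := by
  have hn2 : (2 : ℝ) ≤ n := by exact_mod_cast hn
  calc filNorm n x ^ (((n : ℝ) - 1) / 2)
      = (filNorm n x ^ (n : ℝ)) ^
          ((((n : ℝ) - 1) / ((n : ℝ) + 1)) / (2 * (n : ℝ) / ((n : ℝ) + 1))) := by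
        rw [← rpow_mul (filNorm_nonneg n x)]
        congr 1
        field_simp
    _ ≤ _ := by
        rw [filNorm_rpow_natCast (by omega)]
        refine rpow_sum_rpow_le_sum_rpow (fun j _ => ?_)
          (div_pos (by linarith) (by positivity)) ?_
        · exact add_nonneg (by positivity) (filNormRest_nonneg n x j)
        · gcongr
          linarith

end Filiform

/-- Lower bound for `|X₁Ñ(x)|`, `X₁ = ∂_{x₁}`:
`|X₁Ñ(x)| ≥ C ‖x‖^{(n−1)/2} |x₁|^{(n−1)/2} / Ñ(x)^{n−1}` on the set of points with all
coordinates nonzero, with `C = C(n) > 0`. -/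
theorem X1_filN_lower_bound (n : ℕ) (hn : 3 ≤ n) :
    ∃ C : ℝ, 0 < C ∧ ∀ x : ℕ → ℝ, (∀ i ∈ Finset.Icc 1 (n + 1), x i ≠ 0) →
      ∀ d : ℝ, HasDerivAt (fun t => filN n (Function.update x 1 (x 1 + t))) d 0 →
        C * filNorm n x ^ (((n : ℝ) - 1) / 2) * |x 1| ^ (((n : ℝ) - 1) / 2)
          / filN n x ^ ((n : ℝ) - 1) ≤ |d| := by
  refine ⟨1, one_pos, fun x hx d hd => ?_⟩
  have hx1 : x 1 ≠ 0 := hx 1 (mem_Icc.2 ⟨le_rfl, by omega⟩)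
  have hσ := filNorm_rpow_le_sumAbsRpow (by omega : 2 ≤ n) x
  have hσ₀ := (rpow_nonneg (filNorm_nonneg n x) _).trans hσ
  have hN := rpow_nonneg (filN_nonneg n x) (1 - (n : ℝ))
  rw [hd.unique (hasDerivAt_filN_update_one (by omega) hx1), abs_mul, abs_sign_of_ne_zero hx1,
    abs_mul, abs_mul, abs_of_nonneg hσ₀, abs_of_nonneg hN,
    abs_of_nonneg (rpow_nonneg (abs_nonneg (x 1)) _), one_mul, one_mul,
    mul_comm (filNorm n x ^ _), div_eq_mul_inv, ← rpow_neg (filN_nonneg n x), neg_sub]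
  gcongr
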